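/- (Corollary on correlations) Let (χ,π) and (χ',π') be vectors in (0,1]ⁿ with ⟨χ⟩ₐ = ⟨χ'⟩ₐ, ⟨π⟩ₐ = ⟨π'⟩ₐ, and ⟨χπ⟩_{a²} < ⟨χ'π'⟩_{a²}. Then the corresponding upper bounds satisfy α_u < α_u', where α_u = 1 − δ + κ m̄ n β with κ defined as the larger root of the quadratic (1−λ')⟨χπ⟩_{a²}m̄² = (λ'm̄ − m̄⟨χ⟩ₐ)(λ'm̄ − m̄⟨π⟩ₐ) rescaled appropriately, i.e. κ = (⟨χ⟩ₐ + ⟨π⟩ₐ − m̄⟨χπ⟩_{a²} + √((⟨χ⟩ₐ + ⟨π⟩ₐ − m̄⟨χπ⟩_{a²})² + 4(⟨χπ⟩_{a²} − ⟨χ⟩ₐ⟨π⟩ₐ)))/2. -/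

import Mathlib

/-!
Write `A = ⟨χ⟩ₐ`, `B = ⟨π⟩ₐ`, `C = ⟨χπ⟩_{a²}`; then `κ` is the larger root of
`q_C(y) = (y - A)(y - B) - C (1 - m̄ y)`. Averaging `(1 - aχ)(1 - aπ) ≥ 0` gives
`A + B - 1 ≤ C`, which together with `C < C' ≤ min(A, B)` forces `A, B < 1`. Hence
`q_C(1/m̄) = (1/m̄ - A)(1/m̄ - B) > 0` with `1/m̄` right of the vertex, so `m̄ κ < 1`, and then
`q_{C'}(κ) = -(C' - C)(1 - m̄ κ) < 0` puts `κ` strictly below the larger root `κ'` of `q_{C'}`.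
-/

open Finset

/-- The larger root of `y ^ 2 - b * y - c` (when the discriminant is nonnegative). -/
noncomputable def largerRoot (b c : ℝ) : ℝ := (b + √(b ^ 2 + 4 * c)) / 2

section LargerRoot

variable {b c : ℝ}

lemma sq_sub_mul_sub_eq (hD : 0 ≤ b ^ 2 + 4 * c) (y : ℝ) :
    y ^ 2 - b * y - c = (y - largerRoot b c) * (y - (b - √(b ^ 2 + 4 * c)) / 2) := by
  have hs := Real.sq_sqrt hD
  unfold largerRoot
  linear_combination hs / 4

lemma largerRoot_isRoot (hD : 0 ≤ b ^ 2 + 4 * c) :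
    largerRoot b c ^ 2 - b * largerRoot b c - c = 0 := by
  rw [sq_sub_mul_sub_eq hD, sub_self, zero_mul]

lemma lt_largerRoot_of_neg (hD : 0 ≤ b ^ 2 + 4 * c) {y : ℝ} (hy : y ^ 2 - b * y - c < 0) :
    y < largerRoot b c := by
  rw [sq_sub_mul_sub_eq hD] at hy
  by_contra! hle
  have hs := Real.sqrt_nonneg (b ^ 2 + 4 * c)
  have hgap : largerRoot b c - (b - √(b ^ 2 + 4 * c)) / 2 = √(b ^ 2 + 4 * c) := by
    unfold largerRoot; ring
  nlinarith [mul_nonneg (sub_nonneg.2 hle) hs]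

lemma largerRoot_lt_of_pos (hD : 0 ≤ b ^ 2 + 4 * c) {y : ℝ} (hvertex : b / 2 ≤ y)
    (hy : 0 < y ^ 2 - b * y - c) : largerRoot b c < y := by
  rw [sq_sub_mul_sub_eq hD] at hy
  have hright : 0 ≤ y - (b - √(b ^ 2 + 4 * c)) / 2 := by
    linarith [Real.sqrt_nonneg (b ^ 2 + 4 * c)]
  exact sub_pos.1 (pos_of_mul_pos_left hy hright)

end LargerRoot

noncomputable def kappa (m A B C : ℝ) : ℝ := largerRoot (A + B - m * C) (C - A * B)

lemma kappa_lt_kappa {m A B C C' : ℝ} (hm : 0 < m) (hm1 : m ≤ 1) (hA : A < 1) (hB : B < 1)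
    (hC : 0 ≤ C) (hCC' : C < C')
    (hD : 0 ≤ (A + B - m * C) ^ 2 + 4 * (C - A * B))
    (hD' : 0 ≤ (A + B - m * C') ^ 2 + 4 * (C' - A * B)) :
    kappa m A B C < kappa m A B C' := by
  have hq : ∀ c y : ℝ,
      y ^ 2 - (A + B - m * c) * y - (c - A * B) = (y - A) * (y - B) - c * (1 - m * y) :=
    fun _ _ => by ring
  set k := kappa m A B C
  have hk : (k - A) * (k - B) - C * (1 - m * k) = 0 := (hq C k).symm.trans (largerRoot_isRoot hD)
  have hmk : m * k < 1 := by
    have hinv : 1 ≤ 1 / m := one_le_one_div hm hm1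
    have hk_lt : k < 1 / m := by
      refine largerRoot_lt_of_pos hD (by nlinarith [mul_nonneg hm.le hC]) ?_
      rw [hq, mul_one_div_cancel hm.ne', sub_self, mul_zero, sub_zero]
      exact mul_pos (by linarith) (by linarith)
    rwa [lt_div_iff₀ hm, mul_comm] at hk_lt
  refine lt_largerRoot_of_neg hD' ?_
  rw [hq]
  nlinarith [mul_pos (sub_pos.2 hCC') (sub_pos.2 hmk)]

section Averages

variable {n : ℕ} (a x y : Fin n → ℝ)

lemma avg_sq_mul_le_avg (hx : ∀ i, 0 ≤ a i * x i) (hy : ∀ i, a i * y i ≤ 1) :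
    (1 / (n : ℝ)) * ∑ i, a i ^ 2 * (x i * y i) ≤ (1 / (n : ℝ)) * ∑ i, a i * x i := by
  refine mul_le_mul_of_nonneg_left (sum_le_sum fun i _ => ?_) (by positivity)
  calc a i ^ 2 * (x i * y i) = a i * x i * (a i * y i) := by ring
    _ ≤ a i * x i := mul_le_of_le_one_right (hx i) (hy i)

lemma avg_add_avg_le_one_add_avg (hn : n ≠ 0) (hx : ∀ i, a i * x i ≤ 1)
    (hy : ∀ i, a i * y i ≤ 1) :
    (1 / (n : ℝ)) * ∑ i, a i * x i + (1 / (n : ℝ)) * ∑ i, a i * y i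
      ≤ 1 + (1 / (n : ℝ)) * ∑ i, a i ^ 2 * (x i * y i) := by
  have hn' : (n : ℝ) ≠ 0 := Nat.cast_ne_zero.2 hn
  have hsum : ∑ i, a i * x i + ∑ i, a i * y i ≤ n + ∑ i, a i ^ 2 * (x i * y i) :=
    calc ∑ i, a i * x i + ∑ i, a i * y i = ∑ i, (a i * x i + a i * y i) := sum_add_distrib.symm
      _ ≤ ∑ i, (1 + a i ^ 2 * (x i * y i)) := sum_le_sum fun i _ => by
        nlinarith [mul_nonneg (sub_nonneg.2 (hx i)) (sub_nonneg.2 (hy i))]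
      _ = n + ∑ i, a i ^ 2 * (x i * y i) := by simp [sum_add_distrib]
  calc (1 / (n : ℝ)) * ∑ i, a i * x i + (1 / (n : ℝ)) * ∑ i, a i * y i
      = (1 / (n : ℝ)) * (∑ i, a i * x i + ∑ i, a i * y i) := by ring
    _ ≤ (1 / (n : ℝ)) * (n + ∑ i, a i ^ 2 * (x i * y i)) := by gcongr
    _ = 1 + (1 / (n : ℝ)) * ∑ i, a i ^ 2 * (x i * y i) := by rw [mul_add, one_div_mul_cancel hn']

end Averages

theorem stmt12_general (n : ℕ) (hn : 1 ≤ n) (a χ π χ' π' : Fin n → ℝ) (mbar β δ : ℝ)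
    (ha : ∀ i, 0 < a i ∧ a i ≤ 1)
    (hχ : ∀ i, 0 < χ i ∧ χ i ≤ 1) (hπ : ∀ i, 0 < π i ∧ π i ≤ 1)
    (hχ' : ∀ i, 0 < χ' i ∧ χ' i ≤ 1) (hπ' : ∀ i, 0 < π' i ∧ π' i ≤ 1)
    (hm : 0 < mbar) (hm1 : mbar ≤ 1) (hβ : 0 < β) :
    let χa := (1 / (n : ℝ)) * ∑ i, a i * χ i
    let πa := (1 / (n : ℝ)) * ∑ i, a i * π i
    let χπa2 := (1 / (n : ℝ)) * ∑ i, a i ^ 2 * (χ i * π i)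
    let χa' := (1 / (n : ℝ)) * ∑ i, a i * χ' i
    let πa' := (1 / (n : ℝ)) * ∑ i, a i * π' i
    let χπa2' := (1 / (n : ℝ)) * ∑ i, a i ^ 2 * (χ' i * π' i)
    let κ := (χa + πa - mbar * χπa2 +
      Real.sqrt ((χa + πa - mbar * χπa2) ^ 2 + 4 * (χπa2 - χa * πa))) / 2
    let κ' := (χa' + πa' - mbar * χπa2' +
      Real.sqrt ((χa' + πa' - mbar * χπa2') ^ 2 + 4 * (χπa2' - χa' * πa'))) / 2
    χa = χa' → πa = πa' → χπa2 < χπa2' →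
    0 ≤ (χa + πa - mbar * χπa2) ^ 2 + 4 * (χπa2 - χa * πa) →
    0 ≤ (χa' + πa' - mbar * χπa2') ^ 2 + 4 * (χπa2' - χa' * πa') →
      1 - δ + κ * mbar * n * β < 1 - δ + κ' * mbar * n * β := by
  intro A B C A' B' C' κ κ' hA hB hC hD hD'
  have hn0 : n ≠ 0 := Nat.one_le_iff_ne_zero.1 hn
  have hunit : ∀ u : Fin n → ℝ, (∀ i, 0 < u i ∧ u i ≤ 1) → ∀ i, 0 ≤ a i * u i ∧ a i * u i ≤ 1 :=
    fun u hu i => ⟨mul_nonneg (ha i).1.le (hu i).1.le, mul_le_one₀ (ha i).2 (hu i).1.le (hu i).2⟩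
  have hC0 : 0 ≤ C := mul_nonneg (by positivity) <| sum_nonneg fun i _ =>
    mul_nonneg (sq_nonneg _) (mul_nonneg (hχ i).1.le (hπ i).1.le)
  have hC'A : C' ≤ A' :=
    avg_sq_mul_le_avg a χ' π' (fun i => (hunit χ' hχ' i).1) (fun i => (hunit π' hπ' i).2)
  have hC'B : C' ≤ B' := by
    have := avg_sq_mul_le_avg a π' χ' (fun i => (hunit π' hπ' i).1) (fun i => (hunit χ' hχ' i).2)
    simpa only [mul_comm (π' _)] using this
  have hABC : A + B ≤ 1 + C :=
    avg_add_avg_le_one_add_avg a χ π hn0 (fun i => (hunit χ hχ i).2) (fun i => (hunit π hπ i).2)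
  clear_value A B C A' B' C'
  subst hA hB
  have hκ : κ < κ' := kappa_lt_kappa hm hm1 (by linarith) (by linarith) hC0 hC hD hD'
  gcongr

/-- Corollary on correlations: If (χ,π) and (χ',π') in (0,1]ⁿ have the
same weighted averages ⟨χ⟩ₐ = ⟨χ'⟩ₐ and ⟨π⟩ₐ = ⟨π'⟩ₐ, but ⟨χπ⟩_{a²} < ⟨χ'π'⟩_{a²},
then α_u < α_u', where α_u = 1 − δ + κ m̄ n β and κ is the explicit larger-root formula. -/
theorem stmt12 (n : ℕ) (hn : 1 ≤ n) (a χ π χ' π' : Fin n → ℝ) (mbar β δ : ℝ)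
    (ha : ∀ i, 0 < a i ∧ a i ≤ 1)
    (hχ : ∀ i, 0 < χ i ∧ χ i ≤ 1) (hπ : ∀ i, 0 < π i ∧ π i ≤ 1)
    (hχ' : ∀ i, 0 < χ' i ∧ χ' i ≤ 1) (hπ' : ∀ i, 0 < π' i ∧ π' i ≤ 1)
    (hm : 0 < mbar) (hm1 : mbar ≤ 1) (hβ : 0 < β) (hβ1 : β ≤ 1)
    (hδ : 0 < δ) (hδ1 : δ ≤ 1) :
    let χa := (1 / (n : ℝ)) * ∑ i, a i * χ i
    let πa := (1 / (n : ℝ)) * ∑ i, a i * π i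
    let χπa2 := (1 / (n : ℝ)) * ∑ i, a i ^ 2 * (χ i * π i)
    let χa' := (1 / (n : ℝ)) * ∑ i, a i * χ' i
    let πa' := (1 / (n : ℝ)) * ∑ i, a i * π' i
    let χπa2' := (1 / (n : ℝ)) * ∑ i, a i ^ 2 * (χ' i * π' i)
    let κ := (χa + πa - mbar * χπa2 +
      Real.sqrt ((χa + πa - mbar * χπa2) ^ 2 + 4 * (χπa2 - χa * πa))) / 2
    let κ' := (χa' + πa' - mbar * χπa2' +
      Real.sqrt ((χa' + πa' - mbar * χπa2') ^ 2 + 4 * (χπa2' - χa' * πa'))) / 2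
    χa = χa' → πa = πa' → χπa2 < χπa2' →
    0 ≤ (χa + πa - mbar * χπa2) ^ 2 + 4 * (χπa2 - χa * πa) →
    0 ≤ (χa' + πa' - mbar * χπa2') ^ 2 + 4 * (χπa2' - χa' * πa') →
      1 - δ + κ * mbar * n * β < 1 - δ + κ' * mbar * n * β :=
  stmt12_general n hn a χ π χ' π' mbar β δ ha hχ hπ hχ' hπ' hm hm1 hβ
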